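/- Conservativeness relative to the oracle: under Assumption (Indep), with P_0 atomless, for all integers n, m ≥ 1 and α ∈ (0,1), the semi-supervised BH procedure satisfies FDR(P, BĤ_α) ≤ α·m_0/m = FDR(P, BH*_α); that is, its FDR is at most the FDR of the oracle BH procedure at the same level. -/

import Mathlib

open MeasureTheory ProbabilityTheory Finset

noncomputable section

namespace SemiSup

/-- The data space: a null training sample of size `n` and a test sample of size `m`. -/
abbrev Data (n m : ℕ) := (Fin n → ℝ) × (Fin m → ℝ)

/-- Conservative empirical p-value. -/
def phat (n : ℕ) (Y : Fin n → ℝ) (x : ℝ) : ℝ :=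
  (1 + (((Finset.univ : Finset (Fin n)).filter (fun j => Y j ≥ x)).card : ℝ)) / (n + 1)

/-- Unbiased empirical p-value. -/
def ptilde (n : ℕ) (Y : Fin n → ℝ) (x : ℝ) : ℝ :=
  (((Finset.univ : Finset (Fin n)).filter (fun j => Y j ≥ x)).card : ℝ) / n

/-- BH rejection number `k̂ = max {k ∈ {0,…,m} : p_(k) ≤ α k/m}`, using that
`p_(k) ≤ t` iff at least `k` of the p-values are `≤ t` (convention `p_(0) = 0`). -/
def BHk (m : ℕ) (α : ℝ) (p : Fin m → ℝ) : ℕ :=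
  sSup {k : ℕ | k ≤ m ∧
    k ≤ (((Finset.univ : Finset (Fin m)).filter (fun i => p i ≤ α * k / m)).card)}

/-- BH rejection set at level `α`. -/
def BHset (m : ℕ) (α : ℝ) (p : Fin m → ℝ) : Finset (Fin m) :=
  Finset.univ.filter (fun i => p i ≤ α * (BHk m α p) / m)

/-- The semi-supervised BH procedure (BH applied to the empirical p-values). -/
def BHhat (n m : ℕ) (α : ℝ) (z : Data n m) : Finset (Fin m) :=
  BHset m α (fun i => phat n z.1 (z.2 i))

/-- Upper-tail function of a null distribution. -/
def F0 (P0 : Measure ℝ) (t : ℝ) : ℝ := (P0 (Set.Ici t)).toReal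

/-- The oracle BH procedure (BH applied to the oracle p-values `F0 (X i)`). -/
def BHstar (n m : ℕ) (P0 : Measure ℝ) (α : ℝ) (z : Data n m) : Finset (Fin m) :=
  BHset m α (fun i => F0 P0 (z.2 i))

/-- False discovery proportion. -/
def FDP {m : ℕ} (H0 R : Finset (Fin m)) : ℝ :=
  ((R ∩ H0).card : ℝ) / max 1 (R.card : ℝ)

/-- False discovery rate. -/
def FDR {n m : ℕ} (P : Measure (Data n m)) (H0 : Finset (Fin m))
    (R : Data n m → Finset (Fin m)) : ℝ :=
  ∫ z, FDP H0 (R z) ∂P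

/-- True discovery proportion (`H1` is the set of false nulls). -/
def TDP {m : ℕ} (H1 R : Finset (Fin m)) : ℝ :=
  ((R ∩ H1).card : ℝ) / max 1 (H1.card : ℝ)

/-- The null family: training sample together with the test statistics of true nulls. -/
def nullVec {n m : ℕ} (H0 : Finset (Fin m)) (z : Data n m) :
    Fin n ⊕ {i : Fin m // i ∈ H0} → ℝ :=
  Sum.elim z.1 (fun i => z.2 i.1)

/-- Assumption (Exch): `(Y_1,…,Y_n, X_i, i ∈ H0)` is exchangeable and independent of
`(X_i, i ∉ H0)`. -/
def Exch {n m : ℕ} (P : Measure (Data n m)) (H0 : Finset (Fin m)) : Prop :=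
  (∀ σ : Equiv.Perm (Fin n ⊕ {i : Fin m // i ∈ H0}),
    P.map (fun z => nullVec H0 z ∘ σ) = P.map (nullVec H0)) ∧
  IndepFun (nullVec H0) (fun z (i : {i : Fin m // i ∉ H0}) => z.2 i.1) P

/-- Assumption (Indep): `(Y_1,…,Y_n, X_i, i ∈ H0)` i.i.d. with law `P0`, independent of
`(X_i, i ∉ H0)`. -/
def IndepAssumption {n m : ℕ} (P : Measure (Data n m)) (H0 : Finset (Fin m))
    (P0 : Measure ℝ) : Prop :=
  iIndepFun (fun i z => nullVec H0 z i) P ∧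
  (∀ i, P.map (fun z => nullVec H0 z i) = P0) ∧
  IndepFun (nullVec H0) (fun z (i : {i : Fin m // i ∉ H0}) => z.2 i.1) P

/-- The product distribution `P0^{⊗n} ⊗ P_1 ⊗ … ⊗ P_m` on the data space. -/
def prodP (n m : ℕ) (P0 : Measure ℝ) (Q : Fin m → Measure ℝ) : Measure (Data n m) :=
  (Measure.pi fun _ : Fin n => P0).prod (Measure.pi Q)

open scoped Classical in
/-- The set `H1(P)` of false nulls of a product distribution. -/
def H1set {m : ℕ} (P0 : Measure ℝ) (Q : Fin m → Measure ℝ) : Finset (Fin m) :=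
  Finset.univ.filter (fun i => Q i ≠ P0)

/-- Membership in the class `P_{n,m}` of product distributions with atomless
(continuous) components. -/
def memP (n m : ℕ) (P0 : Measure ℝ) (Q : Fin m → Measure ℝ) : Prop :=
  IsProbabilityMeasure P0 ∧ (∀ i, IsProbabilityMeasure (Q i)) ∧
  (∀ x : ℝ, P0 {x} = 0) ∧ (∀ i, ∀ x : ℝ, Q i {x} = 0)

/-- Membership in the class `A_{n,m}` (at least one false null). -/
def memA (n m : ℕ) (P0 : Measure ℝ) (Q : Fin m → Measure ℝ) : Prop :=
  memP n m P0 Q ∧ 1 ≤ (H1set P0 Q).card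

/-- Membership in the class `A_{n,m,k,α,β}` of distributions with at least `k`
detectable alternatives. -/
def memAk (n m k : ℕ) (α β : ℝ) (P0 : Measure ℝ) (Q : Fin m → Measure ℝ) : Prop :=
  memA n m P0 Q ∧ k ≤ (H1set P0 Q).card ∧
  ((prodP n m P0 Q)
      {z | ((H1set P0 Q) ∩ BHstar n m P0 (α / 2) z).card < k}).toReal ≤ β

/-- The constant `γ*(α,η)` of Proposition 3 (power upper bound). -/
def γstar (α η : ℝ) : ℝ := α⁻¹ * (η ^ 2)⁻¹ * (1 + η) * 28 * Real.log 2

/-- The constant `γ_*(α,η)` of Theorem 2 (lower bound). -/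
def γlow (α η : ℝ) : ℝ := (((1 + (α * (1 - η)) ^ (-(1 / 2) : ℝ)) ^ (3 : ℕ))⁻¹) / 64

section BHbasic

variable {m : ℕ} {α : ℝ} {p q : Fin m → ℝ}

lemma card_filter_le_mono {c d : ℝ} (h : c ≤ d) :
    ((Finset.univ : Finset (Fin m)).filter (fun i => p i ≤ c)).card ≤
      ((Finset.univ : Finset (Fin m)).filter (fun i => p i ≤ d)).card :=
  Finset.card_le_card (Finset.monotone_filter_right _ (fun i _ hi => hi.trans h))

lemma BHk_bddAbove : BddAbove {k : ℕ | k ≤ m ∧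
    k ≤ (((Finset.univ : Finset (Fin m)).filter (fun i => p i ≤ α * k / m)).card)} :=
  ⟨m, fun _ hk => hk.1⟩

lemma BHk_nonempty : ({k : ℕ | k ≤ m ∧
    k ≤ (((Finset.univ : Finset (Fin m)).filter (fun i => p i ≤ α * k / m)).card)}).Nonempty :=
  ⟨0, Nat.zero_le m, Nat.zero_le _⟩

lemma BHk_mem : BHk m α p ≤ m ∧ BHk m α p ≤
    (((Finset.univ : Finset (Fin m)).filter
      (fun i => p i ≤ α * (BHk m α p) / m)).card) :=
  Nat.sSup_mem BHk_nonempty BHk_bddAbove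

lemma BHk_le_m : BHk m α p ≤ m := BHk_mem.1

lemma le_BHk {k : ℕ} (hk : k ≤ m)
    (h : k ≤ (((Finset.univ : Finset (Fin m)).filter (fun i => p i ≤ α * k / m)).card)) :
    k ≤ BHk m α p :=
  le_csSup BHk_bddAbove ⟨hk, h⟩

lemma BHk_le {k : ℕ} (h : ∀ k' : ℕ, k' ≤ m →
    k' ≤ (((Finset.univ : Finset (Fin m)).filter (fun i => p i ≤ α * k' / m)).card) → k' ≤ k) :
    BHk m α p ≤ k :=
  csSup_le BHk_nonempty (fun k' hk' => h k' hk'.1 hk'.2)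

lemma BHk_antitone (hpq : ∀ i, p i ≤ q i) : BHk m α q ≤ BHk m α p :=
  BHk_le (fun k hk hcard => le_BHk hk (hcard.trans (Finset.card_le_card
    (Finset.monotone_filter_right _ (fun i _ hi => (hpq i).trans hi)))))

lemma thresh_mono (hα : 0 ≤ α) {k k' : ℕ} (h : k ≤ k') : α * k / m ≤ α * k' / m := by
  gcongr <;> simp [h]

lemma card_BHset (hα : 0 ≤ α) : (BHset m α p).card = BHk m α p := by
  have h1 : BHk m α p ≤ (BHset m α p).card := BHk_mem.2
  refine le_antisymm (le_csSup BHk_bddAbove ⟨(Finset.card_filter_le _ _).trans (by simp), ?_⟩) h1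
  calc (BHset m α p).card
      ≤ ((Finset.univ : Finset (Fin m)).filter
          (fun i => p i ≤ α * ((BHset m α p).card) / m)).card :=
        card_filter_le_mono (thresh_mono hα h1)
    _ = _ := rfl

lemma mem_BHset_iff {i : Fin m} : i ∈ BHset m α p ↔ p i ≤ α * (BHk m α p) / m := by
  simp [BHset]

end BHbasic
section LOO

variable {m : ℕ} {α : ℝ} {p : Fin m → ℝ} {i : Fin m}

lemma update_le (h0 : 0 ≤ p i) : ∀ j, Function.update p i 0 j ≤ p j := by
  intro j
  rcases eq_or_ne j i with rfl | hj
  · simp [Function.update_self, h0]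
  · simp [Function.update_of_ne hj]

lemma one_le_BHk_update (hα : 0 < α) (hm : 1 ≤ m) (p : Fin m → ℝ) (i : Fin m) :
    1 ≤ BHk m α (Function.update p i 0) := by
  refine le_BHk hm ?_
  refine Finset.card_pos.mpr ⟨i, ?_⟩
  simp only [Finset.mem_filter, Finset.mem_univ, true_and, Function.update_self]
  positivity

lemma filter_update_congr {k' : ℕ} (h0 : 0 ≤ p i) (hpi : p i ≤ α * k' / m) :
    ((Finset.univ : Finset (Fin m)).filter (fun j => Function.update p i 0 j ≤ α * k' / m)) =
      ((Finset.univ : Finset (Fin m)).filter (fun j => p j ≤ α * k' / m)) := by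
  refine Finset.filter_congr (fun j _ => ?_)
  rcases eq_or_ne j i with rfl | hj
  · simp only [Function.update_self]
    exact ⟨fun _ => hpi, fun _ => le_trans h0 hpi⟩
  · simp [Function.update_of_ne hj]

lemma BHk_update_eq (hα : 0 < α) (h0 : 0 ≤ p i)
    (hpi : p i ≤ α * BHk m α p / m) :
    BHk m α (Function.update p i 0) = BHk m α p := by
  have hle : BHk m α p ≤ BHk m α (Function.update p i 0) :=
    BHk_antitone (update_le h0)
  refine le_antisymm ?_ hle
  refine le_BHk BHk_le_m ?_
  have hpi' : p i ≤ α * BHk m α (Function.update p i 0) / m :=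
    hpi.trans (thresh_mono hα.le hle)
  rw [← filter_update_congr h0 hpi']
  exact BHk_mem.2

lemma event_iff_update (hα : 0 < α) (h0 : 0 ≤ p i) :
    p i ≤ α * BHk m α p / m ↔ p i ≤ α * BHk m α (Function.update p i 0) / m := by
  constructor
  · intro h; rw [BHk_update_eq hα h0 h]; exact h
  · intro h
    refine h.trans (thresh_mono hα.le ?_)
    refine le_BHk BHk_le_m ?_
    rw [← filter_update_congr h0 h]
    exact BHk_mem.2

lemma term_eq_update (hα : 0 < α) (h0 : 0 ≤ p i) :
    (if p i ≤ α * BHk m α p / m then (1:ℝ) else 0) / max 1 (BHk m α p : ℝ) =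
      (if p i ≤ α * BHk m α (Function.update p i 0) / m then (1:ℝ) else 0) /
        max 1 (BHk m α (Function.update p i 0) : ℝ) := by
  by_cases h : p i ≤ α * BHk m α p / m
  · rw [if_pos h, if_pos ((event_iff_update hα h0).mp h), BHk_update_eq hα h0 h]
  · rw [if_neg h, if_neg (fun hc => h ((event_iff_update hα h0).mpr hc))]
    simp

end LOO

section CoreLemma

lemma core_sum_le {C : Type*} [Fintype C] {m : ℕ} {α : ℝ}
    (hα : 0 < α) (hm : 1 ≤ m)
    (b u : C → ℝ) (K : C → ℕ)
    (hu : ∀ c, (((Finset.univ : Finset C).filter (fun d => b d ≥ b c)).card : ℝ)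
        ≤ (Fintype.card C) * u c)
    (hmono : ∀ c d, b d ≤ b c → u c ≤ u d ∧ K d ≤ K c) :
    ∑ c, (if u c ≤ α * K c / m then (1:ℝ) else 0) / max 1 (K c : ℝ)
      ≤ (Fintype.card C) * (α / m) := by
  classical
  have hm' : (0:ℝ) < m := by exact_mod_cast hm
  set S : Finset C := Finset.univ.filter (fun c => u c ≤ α * K c / m) with hS
  have hsum : ∑ c, (if u c ≤ α * K c / m then (1:ℝ) else 0) / max 1 (K c : ℝ)
      = ∑ c ∈ S, 1 / max 1 (K c : ℝ) := by
    rw [Finset.sum_filter]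
    refine Finset.sum_congr rfl (fun c _ => ?_)
    by_cases h : u c ≤ α * K c / m <;> simp [h]
  rw [hsum]
  rcases S.eq_empty_or_nonempty with hSe | hSne
  · rw [hSe]; simp; positivity
  obtain ⟨c0, hc0S, hc0min⟩ := S.exists_min_image b hSne
  have hc0 : u c0 ≤ α * K c0 / m := (Finset.mem_filter.mp hc0S).2
  -- u c0 > 0
  have hcard1 : (1:ℝ) ≤ (((Finset.univ : Finset C).filter (fun d => b d ≥ b c0)).card : ℝ) := by
    have : c0 ∈ (Finset.univ : Finset C).filter (fun d => b d ≥ b c0) := by simp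
    exact_mod_cast Finset.card_pos.mpr ⟨c0, this⟩
  have hNpos : (0:ℝ) < Fintype.card C := by
    have : 0 < Fintype.card C := Fintype.card_pos_iff.mpr ⟨c0⟩
    exact_mod_cast this
  have huc0 : 0 < u c0 := by
    by_contra h
    push_neg at h
    have := (hu c0).trans (by nlinarith : (Fintype.card C : ℝ) * u c0 ≤ 0)
    linarith
  have hKc0 : 1 ≤ K c0 := by
    by_contra h
    push_neg at h
    interval_cases hK : K c0
    · simp [hK] at hc0; linarith
  have hKc0' : (1:ℝ) ≤ (K c0 : ℝ) := by exact_mod_cast hKc0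
  -- each term bound
  have hterm : ∀ c ∈ S, 1 / max 1 (K c : ℝ) ≤ 1 / (K c0 : ℝ) := by
    intro c hc
    have hbc : b c0 ≤ b c := hc0min c hc
    have hK : K c0 ≤ K c := (hmono c c0 hbc).2
    have h1 : (K c0 : ℝ) ≤ max 1 (K c : ℝ) :=
      le_max_of_le_right (by exact_mod_cast hK)
    exact one_div_le_one_div_of_le (by linarith) h1
  have hSsub : S ⊆ (Finset.univ : Finset C).filter (fun d => b d ≥ b c0) := by
    intro c hc
    simp only [Finset.mem_filter, Finset.mem_univ, true_and]
    exact hc0min c hc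
  have hScard : (S.card : ℝ) ≤ (Fintype.card C) * u c0 :=
    le_trans (by exact_mod_cast Finset.card_le_card hSsub) (hu c0)
  calc ∑ c ∈ S, 1 / max 1 (K c : ℝ)
      ≤ ∑ _c ∈ S, 1 / (K c0 : ℝ) := Finset.sum_le_sum hterm
    _ = S.card / (K c0 : ℝ) := by rw [Finset.sum_const]; ring
    _ ≤ ((Fintype.card C) * (α * K c0 / m)) / (K c0 : ℝ) := by
        apply div_le_div_of_nonneg_right ?x ?y |>.trans le_rfl
        case x => exact hScard.trans (by nlinarith)
        case y => linarith
    _ = (Fintype.card C) * (α / m) := by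
        field_simp

end CoreLemma
section Config

variable {n m : ℕ} {α : ℝ}

/-- p-value vector of the semi-supervised procedure. -/
def pvec (n m : ℕ) (z : Data n m) : Fin m → ℝ := fun j => phat n z.1 (z.2 j)

lemma FDP_BHset_eq (hα : 0 ≤ α) (H0 : Finset (Fin m)) (p : Fin m → ℝ) :
    FDP H0 (BHset m α p) =
      ∑ i ∈ H0, (if p i ≤ α * BHk m α p / m then (1:ℝ) else 0) / max 1 (BHk m α p : ℝ) := by
  classical
  rw [FDP]
  have hinter : (BHset m α p ∩ H0) = H0.filter (fun i => p i ≤ α * BHk m α p / m) := by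
    ext j; simp [BHset, Finset.mem_filter, and_comm]
  have hcard : (((BHset m α p ∩ H0).card : ℝ))
      = ∑ i ∈ H0, (if p i ≤ α * BHk m α p / m then (1:ℝ) else 0) := by
    rw [hinter, Finset.card_filter]
    push_cast
    try rfl
  rw [hcard, Finset.sum_div, card_BHset hα]

/-- Reconstruction of the data from the null block and the non-null block. -/
def Phi (n m : ℕ) (H0 : Finset (Fin m))
    (p : ((Fin n ⊕ {i : Fin m // i ∈ H0}) → ℝ) × ({i : Fin m // i ∉ H0} → ℝ)) : Data n m :=
  (fun j => p.1 (Sum.inl j),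
   fun i => if h : i ∈ H0 then p.1 (Sum.inr ⟨i, h⟩) else p.2 ⟨i, h⟩)

lemma Phi_nullVec (H0 : Finset (Fin m)) (z : Data n m) :
    Phi n m H0 (nullVec H0 z, fun i => z.2 i.1) = z := by
  refine Prod.ext rfl ?_
  funext i
  by_cases h : i ∈ H0 <;> simp [Phi, nullVec, h]

variable {H0 : Finset (Fin m)} (i0 : {i : Fin m // i ∈ H0})

/-- The swap permutations indexing the `n+1` exchangeable configurations. -/
def tauC (c : Option (Fin n)) : Equiv.Perm (Fin n ⊕ {i : Fin m // i ∈ H0}) :=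
  c.elim 1 (fun j => Equiv.swap (Sum.inl j) (Sum.inr i0))

/-- The slot occupied by the test statistic `X_{i0}` in configuration `c`. -/
def betaC (c : Option (Fin n)) : Fin n ⊕ {i : Fin m // i ∈ H0} :=
  c.elim (Sum.inr i0) Sum.inl

lemma tauC_inr (c : Option (Fin n)) : tauC (n := n) i0 c (Sum.inr i0) = betaC i0 c := by
  cases c with
  | none => simp [tauC, betaC]
  | some j => simp [tauC, betaC, Equiv.swap_apply_right]

lemma tauC_inr_ne {j : {i : Fin m // i ∈ H0}} (hj : j ≠ i0) (c : Option (Fin n)) :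
    tauC (n := n) i0 c (Sum.inr j) = Sum.inr j := by
  cases c with
  | none => simp [tauC]
  | some j' =>
      show Equiv.swap (Sum.inl j') (Sum.inr i0) (Sum.inr j) = Sum.inr j
      exact Equiv.swap_apply_of_ne_of_ne (by simp) (by simp [hj])

/-- Explicit bijection `Fin n ≃ {d ≠ c}` realizing the training slots of configuration `c`. -/
def eC (c : Option (Fin n)) (j : Fin n) : Option (Fin n) :=
  if some j = c then none else some j

lemma betaC_eC (c : Option (Fin n)) (j : Fin n) :
    betaC i0 (eC c j) = tauC (n := n) i0 c (Sum.inl j) := by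
  cases c with
  | none => simp [eC, betaC, tauC]
  | some j' =>
      by_cases h : j = j'
      · subst h; simp [eC, betaC, tauC, Equiv.swap_apply_left]
      · have hne : some j ≠ some j' := by simpa using h
        simp only [eC, if_neg hne, betaC, Option.elim]
        show Sum.inl j = Equiv.swap (Sum.inl j') (Sum.inr i0) (Sum.inl j)
        exact (Equiv.swap_apply_of_ne_of_ne (by simpa using h) (by simp)).symm

lemma eC_ne (c : Option (Fin n)) (j : Fin n) : eC c j ≠ c := by
  unfold eC
  split
  · rename_i h; rw [← h]; simp
  · assumption

lemma eC_injective (c : Option (Fin n)) : Function.Injective (eC c) := by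
  intro j j' h
  by_cases h1 : some j = c <;> by_cases h2 : some j' = c
  · rw [← h2] at h1; exact Option.some.inj h1
  · simp only [eC, if_pos h1, if_neg h2] at h; exact absurd h.symm (Option.some_ne_none j')
  · simp only [eC, if_neg h1, if_pos h2] at h; exact absurd h (Option.some_ne_none j)
  · simp only [eC, if_neg h1, if_neg h2] at h; exact Option.some.inj h

section ConfigCount

variable (v : (Fin n ⊕ {i : Fin m // i ∈ H0}) → ℝ) (w : {i : Fin m // i ∉ H0} → ℝ)

/-- The `n+1` null values. -/
def bC (c : Option (Fin n)) : ℝ := v (betaC i0 c)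

/-- The data in configuration `c`. -/
def zC (c : Option (Fin n)) : Data n m := Phi n m H0 (v ∘ (tauC i0 c), w)

lemma zC_fst (c : Option (Fin n)) (j : Fin n) :
    (zC i0 v w c).1 j = v (tauC i0 c (Sum.inl j)) := rfl

lemma zC_snd_i0 (c : Option (Fin n)) : (zC i0 v w c).2 i0.1 = bC i0 v c := by
  have h : (i0 : Fin m) ∈ H0 := i0.2
  show (if h' : (i0 : Fin m) ∈ H0 then (v ∘ (tauC i0 c)) (Sum.inr ⟨i0.1, h'⟩) else w ⟨i0.1, h'⟩)
      = bC i0 v c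
  rw [dif_pos h]
  show v (tauC i0 c (Sum.inr ⟨i0.1, h⟩)) = v (betaC i0 c)
  congr 1
  exact tauC_inr i0 c

/-- The fixed test statistics (all but `i0`). -/
def xiC (j : Fin m) : ℝ := if h : j ∈ H0 then v (Sum.inr ⟨j, h⟩) else w ⟨j, h⟩

lemma zC_snd_ne (c : Option (Fin n)) {j : Fin m} (hj : j ≠ i0.1) :
    (zC i0 v w c).2 j = xiC (H0 := H0) v w j := by
  by_cases h : j ∈ H0
  · show (if h' : j ∈ H0 then (v ∘ (tauC i0 c)) (Sum.inr ⟨j, h'⟩) else w ⟨j, h'⟩) = _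
    rw [dif_pos h]
    unfold xiC
    rw [dif_pos h]
    show v (tauC i0 c (Sum.inr ⟨j, h⟩)) = _
    rw [tauC_inr_ne i0 (fun hc => hj (congrArg Subtype.val hc)) c]
  · show (if h' : j ∈ H0 then (v ∘ (tauC i0 c)) (Sum.inr ⟨j, h'⟩) else w ⟨j, h'⟩) = _
    unfold xiC
    rw [dif_neg h, dif_neg h]

/-- Key counting identity: the training sample of configuration `c` consists of the
null values `b d` for `d ≠ c`. -/
lemma count_zC_fst (c : Option (Fin n)) (x : ℝ) :
    ((Finset.univ : Finset (Fin n)).filter (fun j => (zC i0 v w c).1 j ≥ x)).card =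
      ((Finset.univ : Finset (Option (Fin n))).filter
        (fun d => d ≠ c ∧ bC i0 v d ≥ x)).card := by
  classical
  refine Finset.card_bij (fun j _ => eC c j) ?_ ?_ ?_
  · intro j hj
    simp only [Finset.mem_filter, Finset.mem_univ, true_and] at hj ⊢
    refine ⟨eC_ne c j, ?_⟩
    show v (betaC i0 (eC c j)) ≥ x
    rw [betaC_eC]
    exact hj
  · exact fun j _ j' _ h => eC_injective c h
  · intro d hd
    simp only [Finset.mem_filter, Finset.mem_univ, true_and] at hd
    obtain ⟨hdc, hbd⟩ := hd
    cases d with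
    | some j =>
        have hec : eC c j = some j := by unfold eC; rw [if_neg hdc]
        refine ⟨j, ?_, hec⟩
        simp only [Finset.mem_filter, Finset.mem_univ, true_and]
        show v (tauC i0 c (Sum.inl j)) ≥ x
        rw [← betaC_eC, hec]
        exact hbd
    | none =>
        cases c with
        | none => exact absurd rfl hdc
        | some j0 =>
            have hec : eC (some j0) j0 = none := by unfold eC; rw [if_pos rfl]
            refine ⟨j0, ?_, hec⟩
            simp only [Finset.mem_filter, Finset.mem_univ, true_and]
            show v (tauC i0 (some j0) (Sum.inl j0)) ≥ x
            rw [← betaC_eC, hec]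
            exact hbd

end ConfigCount
end Config
section Master

variable {n m : ℕ} {α : ℝ} {H0 : Finset (Fin m)}
variable (i0 : {i : Fin m // i ∈ H0})
variable (v : (Fin n ⊕ {i : Fin m // i ∈ H0}) → ℝ) (w : {i : Fin m // i ∉ H0} → ℝ)

lemma pvec_zC (c : Option (Fin n)) (j : Fin m) :
    pvec n m (zC i0 v w c) j =
      (1 + (((Finset.univ : Finset (Option (Fin n))).filter
        (fun d => d ≠ c ∧ bC i0 v d ≥ (zC i0 v w c).2 j)).card : ℝ)) / (n + 1) := by
  show phat n (zC i0 v w c).1 ((zC i0 v w c).2 j) = _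
  rw [phat, count_zC_fst]

lemma pvec_zC_i0 (c : Option (Fin n)) :
    pvec n m (zC i0 v w c) i0.1 =
      (((Finset.univ : Finset (Option (Fin n))).filter
        (fun d => bC i0 v d ≥ bC i0 v c)).card : ℝ) / (n + 1) := by
  classical
  rw [pvec_zC, zC_snd_i0]
  congr 1
  have : ((Finset.univ : Finset (Option (Fin n))).filter
        (fun d => bC i0 v d ≥ bC i0 v c)) =
      insert c (((Finset.univ : Finset (Option (Fin n))).filter
        (fun d => d ≠ c ∧ bC i0 v d ≥ bC i0 v c))) := by
    ext d
    simp only [Finset.mem_filter, Finset.mem_univ, true_and, Finset.mem_insert]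
    by_cases hd : d = c
    · subst hd; simp
    · simp [hd]
  rw [this, Finset.card_insert_of_notMem (by simp)]
  push_cast
  ring

lemma count_ne_mono {x : ℝ} {c d : Option (Fin n)} (h : bC i0 v d ≤ bC i0 v c) :
    (((Finset.univ : Finset (Option (Fin n))).filter
        (fun e => e ≠ c ∧ bC i0 v e ≥ x)).card : ℝ) ≤
      (((Finset.univ : Finset (Option (Fin n))).filter
        (fun e => e ≠ d ∧ bC i0 v e ≥ x)).card : ℝ) := by
  classical
  rcases eq_or_ne c d with rfl | hcd
  · exact le_refl _
  have : ((Finset.univ : Finset (Option (Fin n))).filter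
        (fun e => e ≠ c ∧ bC i0 v e ≥ x)).card ≤
      (((Finset.univ : Finset (Option (Fin n))).filter
        (fun e => e ≠ d ∧ bC i0 v e ≥ x)).card) := by
    refine Finset.card_le_card_of_injOn (fun e => if e = d then c else e) ?_ ?_
    · intro e he
      simp only [Finset.mem_coe, Finset.mem_filter, Finset.mem_univ, true_and] at he ⊢
      obtain ⟨hec, hbe⟩ := he
      by_cases hed : e = d
      · subst hed
        rw [if_pos rfl]
        exact ⟨hcd, le_trans hbe h⟩
      · rw [if_neg hed]
        exact ⟨hed, hbe⟩
    · intro e he e' he' hee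
      simp only [Finset.coe_filter, Set.mem_setOf_eq] at he he'
      dsimp only at hee
      by_cases h1 : e = d <;> by_cases h2 : e' = d
      · rw [h1, h2]
      · rw [if_pos h1, if_neg h2] at hee; exact absurd hee.symm he'.2.1
      · rw [if_neg h1, if_pos h2] at hee; exact absurd hee he.2.1
      · rwa [if_neg h1, if_neg h2] at hee
  exact_mod_cast this

lemma pvec_zC_mono {c d : Option (Fin n)} (h : bC i0 v d ≤ bC i0 v c) (j : Fin m) :
    pvec n m (zC i0 v w c) j ≤ pvec n m (zC i0 v w d) j := by
  rcases eq_or_ne j i0.1 with rfl | hj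
  · rw [pvec_zC_i0, pvec_zC_i0]
    have hn : (0:ℝ) ≤ n + 1 := by positivity
    apply div_le_div_of_nonneg_right ?_ hn |>.trans le_rfl
    have : ((Finset.univ : Finset (Option (Fin n))).filter
          (fun e => bC i0 v e ≥ bC i0 v c)).card ≤
        (((Finset.univ : Finset (Option (Fin n))).filter
          (fun e => bC i0 v e ≥ bC i0 v d)).card) :=
      Finset.card_le_card (Finset.monotone_filter_right _ (fun e _ he => le_trans h he))
    exact_mod_cast this
  · rw [pvec_zC, pvec_zC, zC_snd_ne i0 v w c hj, zC_snd_ne i0 v w d hj]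
    have hn : (0:ℝ) ≤ n + 1 := by positivity
    apply div_le_div_of_nonneg_right ?_ hn |>.trans le_rfl
    have := count_ne_mono i0 v (x := xiC (H0 := H0) v w j) h
    linarith

/-- Deterministic master inequality: the average over the `n+1` exchangeable
configurations of the FDP contribution of a null coordinate is at most `α/m`. -/
lemma master_ineq (hα : 0 < α) (hm : 1 ≤ m) :
    ∑ c : Option (Fin n),
      (if pvec n m (zC i0 v w c) i0.1 ≤ α * BHk m α (pvec n m (zC i0 v w c)) / m
        then (1:ℝ) else 0) / max 1 ((BHk m α (pvec n m (zC i0 v w c)) : ℝ))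
      ≤ (n + 1) * (α / m) := by
  classical
  have hcard : (Fintype.card (Option (Fin n)) : ℝ) = n + 1 := by
    simp
  have h := core_sum_le (C := Option (Fin n)) hα hm (bC i0 v)
      (fun c => pvec n m (zC i0 v w c) i0.1)
      (fun c => BHk m α (pvec n m (zC i0 v w c)))
      (fun c => by
        have hne : ((n:ℝ)+1) ≠ 0 := by positivity
        rw [pvec_zC_i0, hcard, mul_comm, div_mul_cancel₀ _ hne])
      (fun c d hbd => ⟨pvec_zC_mono i0 v w hbd i0.1,
        BHk_antitone (pvec_zC_mono i0 v w hbd)⟩)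
  rw [hcard] at h
  exact h

end Master
section Meas

variable {X : Type*} [MeasurableSpace X]

lemma measurable_count_le {N : ℕ} {f : X → Fin N → ℝ} (hf : ∀ j, Measurable fun x => f x j)
    {g : X → ℝ} (hg : Measurable g) :
    Measurable fun x => (((Finset.univ : Finset (Fin N)).filter (fun j => f x j ≤ g x)).card) := by
  classical
  have hrw : (fun x => (((Finset.univ : Finset (Fin N)).filter (fun j => f x j ≤ g x)).card))
      = fun x => ∑ j : Fin N, if f x j ≤ g x then (1:ℕ) else 0 := by
    funext x
    rw [Finset.card_filter]
  rw [hrw]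
  exact Finset.measurable_sum _ (fun j _ =>
    Measurable.ite (measurableSet_le (hf j) hg) measurable_const measurable_const)

lemma measurable_count_ge {N : ℕ} {f : X → Fin N → ℝ} (hf : ∀ j, Measurable fun x => f x j)
    {g : X → ℝ} (hg : Measurable g) :
    Measurable fun x =>
      ((((Finset.univ : Finset (Fin N)).filter (fun j => f x j ≥ g x)).card : ℝ)) := by
  classical
  have hrw : (fun x => ((((Finset.univ : Finset (Fin N)).filter (fun j => f x j ≥ g x)).card : ℝ)))
      = fun x => ∑ j : Fin N, if f x j ≥ g x then (1:ℝ) else 0 := by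
    funext x
    rw [Finset.card_filter]
    push_cast [apply_ite ((↑·) : ℕ → ℝ)]
    rfl
  rw [hrw]
  exact Finset.measurable_sum _ (fun j _ =>
    Measurable.ite (measurableSet_le hg (hf j)) measurable_const measurable_const)

lemma measurable_phat_comp {n : ℕ} {Y : X → Fin n → ℝ} (hY : ∀ j, Measurable fun x => Y x j)
    {g : X → ℝ} (hg : Measurable g) :
    Measurable fun x => phat n (Y x) (g x) := by
  unfold phat
  exact ((measurable_const.add (measurable_count_ge hY hg)).div_const _)

lemma measurable_BHk {m : ℕ} (α : ℝ) {q : X → Fin m → ℝ}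
    (hq : ∀ j, Measurable fun x => q x j) :
    Measurable fun x => BHk m α (q x) := by
  classical
  apply measurable_to_countable'
  intro k
  have hkey : ∀ x, BHk m α (q x) = k ↔
      ((k ≤ m ∧ k ≤ (((Finset.univ : Finset (Fin m)).filter
          (fun i => q x i ≤ α * k / m)).card)) ∧
        ∀ k' ∈ Finset.Icc (k+1) m, ¬ (k' ≤ (((Finset.univ : Finset (Fin m)).filter
          (fun i => q x i ≤ α * k' / m)).card))) := by
    intro x
    constructor
    · intro h
      refine ⟨h ▸ BHk_mem, fun k' hk' hcard => ?_⟩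
      simp only [Finset.mem_Icc] at hk'
      have := le_BHk hk'.2 hcard
      omega
    · rintro ⟨⟨hk1, hk2⟩, hall⟩
      refine le_antisymm (BHk_le (fun k' hk'm hk'c => ?_)) (le_BHk hk1 hk2)
      by_contra hgt
      push_neg at hgt
      exact hall k' (Finset.mem_Icc.mpr ⟨hgt, hk'm⟩) hk'c
  have : (fun x => BHk m α (q x)) ⁻¹' {k} =
      ({x | k ≤ m ∧ k ≤ (((Finset.univ : Finset (Fin m)).filter
          (fun i => q x i ≤ α * k / m)).card)} ∩
        ⋂ k' ∈ Finset.Icc (k+1) m, {x | ¬ (k' ≤ (((Finset.univ : Finset (Fin m)).filter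
          (fun i => q x i ≤ α * k' / m)).card))}) := by
    ext x
    simp only [Set.mem_preimage, Set.mem_singleton_iff, Set.mem_inter_iff, Set.mem_setOf_eq,
      Set.mem_iInter, hkey x]
    try tauto
  rw [this]
  have hcnt : ∀ k' : ℕ, MeasurableSet {x | k' ≤ (((Finset.univ : Finset (Fin m)).filter
      (fun i => q x i ≤ α * k' / m)).card)} := by
    intro k'
    have := (measurable_count_le (f := fun x => q x) hq
      (g := fun _ => α * k' / m) measurable_const)
    exact this ((Set.to_countable (Set.Ici k')).measurableSet)
  refine MeasurableSet.inter ?_ (MeasurableSet.biInter (Finset.Icc (k+1) m).countable_toSet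
    (fun k' _ => (hcnt k').compl))
  by_cases hkm : k ≤ m
  · have : {x : X | k ≤ m ∧ k ≤ (((Finset.univ : Finset (Fin m)).filter
        (fun i => q x i ≤ α * k / m)).card)} = {x | k ≤ (((Finset.univ : Finset (Fin m)).filter
        (fun i => q x i ≤ α * k / m)).card)} := by
      ext x; simp [hkm]
    rw [this]; exact hcnt k
  · have : {x : X | k ≤ m ∧ k ≤ (((Finset.univ : Finset (Fin m)).filter
        (fun i => q x i ≤ α * k / m)).card)} = ∅ := by
      ext x; simp [hkm]
    rw [this]; exact MeasurableSet.empty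

lemma measurable_natCast_comp {g : X → ℕ} (hg : Measurable g) (F : ℕ → ℝ) :
    Measurable fun x => F (g x) :=
  (measurable_from_top (f := F)).comp hg

/-- Measurability of the generic BH summand. -/
lemma measurable_summand {m : ℕ} (α : ℝ) {q : X → Fin m → ℝ}
    (hq : ∀ j, Measurable fun x => q x j) (i : Fin m) :
    Measurable fun x =>
      (if q x i ≤ α * BHk m α (q x) / m then (1:ℝ) else 0) / max 1 ((BHk m α (q x) : ℝ)) := by
  have hB : Measurable fun x => BHk m α (q x) := measurable_BHk α hq
  have hBr : Measurable fun x => (α * (BHk m α (q x) : ℝ) / m) :=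
    measurable_natCast_comp hB (fun k => α * k / m)
  have hnum : Measurable fun x => (if q x i ≤ α * BHk m α (q x) / m then (1:ℝ) else 0) :=
    Measurable.ite (measurableSet_le (hq i) hBr) measurable_const measurable_const
  exact hnum.div (measurable_natCast_comp hB (fun k => max 1 (k : ℝ)))

/-- The generic BH summand is bounded by one. -/
lemma summand_bound {m : ℕ} (α : ℝ) (q : Fin m → ℝ) (i : Fin m) :
    (if q i ≤ α * BHk m α q / m then (1:ℝ) else 0) / max 1 ((BHk m α q : ℝ)) ∈
      Set.Icc (0:ℝ) 1 := by
  have h1 : (1:ℝ) ≤ max 1 ((BHk m α q : ℝ)) := le_max_left _ _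
  constructor
  · apply div_nonneg ?_ (by linarith)
    by_cases h : q i ≤ α * BHk m α q / m <;> simp [h]
  · apply div_le_one_of_le₀ ?_ (by linarith)
    by_cases h : q i ≤ α * BHk m α q / m <;> simp [h] <;> linarith

lemma integrable_of_bounded_one {μ : Measure X} [IsProbabilityMeasure μ] {f : X → ℝ}
    (hf : Measurable f) (hb : ∀ x, f x ∈ Set.Icc (0:ℝ) 1) : Integrable f μ := by
  refine (integrable_const (1:ℝ)).mono' hf.aestronglyMeasurable ?_
  filter_upwards with x
  rw [Real.norm_eq_abs, abs_le]
  exact ⟨by linarith [(hb x).1], (hb x).2⟩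

end Meas
section MeasureLemmas

open Filter Topology

variable {ι : Type*} [Fintype ι]

lemma measurable_comp_perm (τ : Equiv.Perm ι) :
    Measurable (fun v : ι → ℝ => v ∘ τ) :=
  measurable_pi_lambda _ (fun i => measurable_pi_apply (τ i))

lemma pi_map_comp_perm (μ : Measure ℝ) [IsProbabilityMeasure μ] (τ : Equiv.Perm ι) :
    Measure.map (fun v : ι → ℝ => v ∘ τ) (Measure.pi fun _ => μ) = Measure.pi fun _ => μ := by
  refine (Measure.pi_eq fun s hs => ?_).symm
  rw [Measure.map_apply (measurable_comp_perm τ) (MeasurableSet.univ_pi hs)]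
  have hpre : (fun v : ι → ℝ => v ∘ τ) ⁻¹' (Set.pi Set.univ s)
      = Set.pi Set.univ (fun i => s (τ.symm i)) := by
    ext v
    simp only [Set.mem_preimage, Set.mem_univ_pi, Function.comp_apply]
    constructor
    · intro h i; have := h (τ.symm i); rwa [Equiv.apply_symm_apply] at this
    · intro h i; have := h (τ i); rwa [Equiv.symm_apply_apply] at this
  rw [hpre, Measure.pi_pi]
  exact Equiv.prod_comp τ.symm fun i => μ (s i)

lemma measurePreserving_comp_perm (μ : Measure ℝ) [IsProbabilityMeasure μ] (τ : Equiv.Perm ι) :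
    MeasurePreserving (fun v : ι → ℝ => v ∘ τ)
      (Measure.pi fun _ => μ) (Measure.pi fun _ => μ) :=
  ⟨measurable_comp_perm τ, pi_map_comp_perm μ τ⟩

lemma map_update_pi [DecidableEq ι] (μ : Measure ℝ) [IsProbabilityMeasure μ] (i : ι) :
    Measure.map (fun p : (ι → ℝ) × ℝ => Function.update p.1 i p.2)
      ((Measure.pi fun _ => μ).prod μ) = Measure.pi fun _ => μ := by
  refine (Measure.pi_eq fun s hs => ?_).symm
  rw [Measure.map_apply measurable_update' (MeasurableSet.univ_pi hs)]
  have hpre : (fun p : (ι → ℝ) × ℝ => Function.update p.1 i p.2) ⁻¹' (Set.pi Set.univ s)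
      = (Set.pi Set.univ (Function.update s i Set.univ)) ×ˢ (s i) := by
    ext p
    simp only [Set.mem_preimage, Set.mem_univ_pi, Set.mem_prod]
    constructor
    · intro h
      refine ⟨fun j => ?_, by simpa using h i⟩
      rcases eq_or_ne j i with rfl | hj
      · simp
      · have := h j
        rw [Function.update_of_ne hj] at this
        rwa [Function.update_of_ne hj]
    · rintro ⟨h1, h2⟩ j
      rcases eq_or_ne j i with rfl | hj
      · simpa using h2
      · have := h1 j
        rw [Function.update_of_ne hj] at this
        rwa [Function.update_of_ne hj]
  rw [hpre, Measure.prod_prod, Measure.pi_pi]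
  have hcongr : ∀ j ∈ (Finset.univ : Finset ι),
      μ (Function.update s i Set.univ j) = Function.update (fun j => μ (s j)) i 1 j := by
    intro j _
    rcases eq_or_ne j i with rfl | hj
    · simp
    · rw [Function.update_of_ne hj, Function.update_of_ne hj]
  rw [Finset.prod_congr rfl hcongr, Finset.prod_update_of_mem (Finset.mem_univ i), one_mul,
    mul_comm, Finset.sdiff_singleton_eq_erase]
  exact Finset.mul_prod_erase Finset.univ (fun x => μ (s x)) (Finset.mem_univ i)

lemma integrable_of_bounded_one' {X : Type*} [MeasurableSpace X] {μ : Measure X}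
    [IsProbabilityMeasure μ] {f : X → ℝ}
    (hf : Measurable f) (hb : ∀ x, f x ∈ Set.Icc (0:ℝ) 1) : Integrable f μ :=
  integrable_of_bounded_one hf hb

lemma integral_update_pi [DecidableEq ι] (μ : Measure ℝ) [IsProbabilityMeasure μ] (i : ι)
    {f : (ι → ℝ) → ℝ} (hf : Measurable f) (hb : ∀ v, f v ∈ Set.Icc (0:ℝ) 1) :
    ∫ v, f v ∂(Measure.pi fun _ : ι => μ)
      = ∫ v, (∫ x, f (Function.update v i x) ∂μ) ∂(Measure.pi fun _ : ι => μ) := by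
  have h1 : ∫ p : (ι → ℝ) × ℝ, f (Function.update p.1 i p.2)
          ∂((Measure.pi fun _ : ι => μ).prod μ)
      = ∫ v, f v ∂(Measure.map (fun p : (ι → ℝ) × ℝ => Function.update p.1 i p.2)
          ((Measure.pi fun _ : ι => μ).prod μ)) :=
    (integral_map measurable_update'.aemeasurable hf.aestronglyMeasurable).symm
  rw [map_update_pi μ i] at h1
  rw [← h1, MeasureTheory.integral_prod]
  exact integrable_of_bounded_one (hf.comp measurable_update') (fun p => hb _)

-- F0 uniformity
lemma F0_antitone (P0 : Measure ℝ) [IsFiniteMeasure P0] : Antitone (F0 P0) := fun x y hxy =>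
  ENNReal.toReal_mono (measure_ne_top _ _) (measure_mono (Set.Ici_subset_Ici.mpr hxy))

lemma measurable_F0 (P0 : Measure ℝ) [IsFiniteMeasure P0] : Measurable (F0 P0) :=
  (F0_antitone P0).measurable

lemma F0_nonneg (P0 : Measure ℝ) (x : ℝ) : 0 ≤ F0 P0 x := ENNReal.toReal_nonneg

lemma F0_uniform (P0 : Measure ℝ) [IsProbabilityMeasure P0] (hcont : ∀ x : ℝ, P0 {x} = 0)
    {c : ℝ} (hc0 : 0 < c) (hc1 : c < 1) :
    MeasurableSet {x | F0 P0 x ≤ c} ∧ P0 {x | F0 P0 x ≤ c} = ENNReal.ofReal c := by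
  set S := {x | F0 P0 x ≤ c} with hSdef
  have hofReal : ∀ x : ℝ, ENNReal.ofReal (F0 P0 x) = P0 (Set.Ici x) := fun x =>
    ENNReal.ofReal_toReal (measure_ne_top _ _)
  have hFle : ∀ {x : ℝ}, x ∈ S ↔ P0 (Set.Ici x) ≤ ENNReal.ofReal c := by
    intro x
    rw [hSdef, Set.mem_setOf_eq, ← ENNReal.ofReal_le_ofReal_iff hc0.le, hofReal x]
  have hup : ∀ x y : ℝ, x ∈ S → x ≤ y → y ∈ S := fun x y hx hxy =>
    le_trans (F0_antitone P0 hxy) hx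
  have hIciIoi : ∀ x : ℝ, P0 (Set.Ici x) = P0 (Set.Ioi x) := by
    intro x
    refine le_antisymm ?_ (measure_mono Set.Ioi_subset_Ici_self)
    calc P0 (Set.Ici x) = P0 ({x} ∪ Set.Ioi x) := by
          rw [Set.singleton_union, Set.Ioi_insert]
      _ ≤ P0 {x} + P0 (Set.Ioi x) := measure_union_le _ _
      _ = P0 (Set.Ioi x) := by rw [hcont x, zero_add]
  have hS_ne : S.Nonempty := by
    have h0 : Tendsto (fun k : ℕ => P0 (Set.Ici (k:ℝ))) atTop
        (𝓝 (P0 (⋂ k : ℕ, Set.Ici (k:ℝ)))) :=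
      tendsto_measure_iInter_atTop (fun k => measurableSet_Ici.nullMeasurableSet)
        (fun a b hab => Set.Ici_subset_Ici.mpr (by exact_mod_cast hab)) ⟨0, measure_ne_top _ _⟩
    have hempty : (⋂ k : ℕ, Set.Ici (k:ℝ)) = ∅ := by
      ext x
      simp only [Set.mem_iInter, Set.mem_Ici, Set.mem_empty_iff_false, iff_false]
      push_neg
      obtain ⟨k, hk⟩ := exists_nat_gt x
      exact ⟨k, hk⟩
    rw [hempty, measure_empty] at h0
    have hev := h0.eventually_lt_const (show (0:ENNReal) < ENNReal.ofReal c by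
      simpa using hc0)
    obtain ⟨k, hk⟩ := hev.exists
    exact ⟨(k:ℝ), hFle.mpr hk.le⟩
  have hbdd : BddBelow S := by
    have h1 : Tendsto (fun k : ℕ => P0 (Set.Ici (-(k:ℝ)))) atTop
        (𝓝 (P0 (⋃ k : ℕ, Set.Ici (-(k:ℝ))))) := by
      have := tendsto_measure_iUnion_atTop (μ := P0)
        (s := fun k : ℕ => Set.Ici (-(k:ℝ)))
        (fun a b hab => Set.Ici_subset_Ici.mpr (by
          have : (a:ℝ) ≤ b := by exact_mod_cast hab
          linarith))
      exact this
    have huniv : (⋃ k : ℕ, Set.Ici (-(k:ℝ))) = Set.univ := by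
      ext x
      simp only [Set.mem_iUnion, Set.mem_Ici, Set.mem_univ, iff_true]
      obtain ⟨k, hk⟩ := exists_nat_gt (-x)
      exact ⟨k, by linarith⟩
    rw [huniv, measure_univ] at h1
    have hev := h1.eventually_const_lt (show ENNReal.ofReal c < 1 by
      exact ENNReal.ofReal_lt_one.mpr hc1)
    obtain ⟨k, hk⟩ := hev.exists
    refine ⟨-(k:ℝ), fun x hx => ?_⟩
    by_contra hcon
    push_neg at hcon
    have hle : P0 (Set.Ici (-(k:ℝ))) ≤ ENNReal.ofReal c :=
      le_trans (measure_mono (Set.Ici_subset_Ici.mpr hcon.le)) (hFle.mp hx)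
    exact absurd hle (not_le.mpr hk)
  set a := sInf S with hadef
  have haS : ∀ x ∈ S, a ≤ x := fun x hx => csInf_le hbdd hx
  have hIoiS : Set.Ioi a ⊆ S := by
    intro x hx
    obtain ⟨s, hsS, hs⟩ := (csInf_lt_iff hbdd hS_ne).mp hx
    exact hup s x hsS hs.le
  have hupper : P0 (Set.Ici a) ≤ ENNReal.ofReal c := by
    rw [hIciIoi]
    have hUnion : Set.Ioi a = ⋃ k : ℕ, Set.Ici (a + 1/((k:ℝ)+1)) := by
      ext x
      simp only [Set.mem_Ioi, Set.mem_iUnion, Set.mem_Ici]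
      constructor
      · intro hx
        obtain ⟨k, hk⟩ := exists_nat_one_div_lt (sub_pos.mpr hx)
        exact ⟨k, by linarith⟩
      · rintro ⟨k, hk⟩
        have hpos : (0:ℝ) < 1/((k:ℝ)+1) := by positivity
        linarith
    rw [hUnion]
    have hmono2 : Monotone (fun k : ℕ => Set.Ici (a + 1/((k:ℝ)+1))) := by
      intro k l hkl
      apply Set.Ici_subset_Ici.mpr
      have hkl' : ((k:ℝ)+1) ≤ ((l:ℝ)+1) := by
        have : (k:ℝ) ≤ l := by exact_mod_cast hkl
        linarith
      have := one_div_le_one_div_of_le (by positivity : (0:ℝ) < (k:ℝ)+1) hkl'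
      linarith
    refine le_of_tendsto (tendsto_measure_iUnion_atTop (μ := P0) hmono2)
      (Eventually.of_forall fun k => ?_)
    have hlt : a < a + 1/((k:ℝ)+1) := by
      have : (0:ℝ) < 1/((k:ℝ)+1) := by positivity
      linarith
    obtain ⟨s, hsS, hs⟩ := (csInf_lt_iff hbdd hS_ne).mp hlt
    exact le_trans (measure_mono (Set.Ici_subset_Ici.mpr hs.le)) (hFle.mp hsS)
  have hlower : ENNReal.ofReal c ≤ P0 (Set.Ici a) := by
    have hInter : Set.Ici a = ⋂ k : ℕ, Set.Ici (a - 1/((k:ℝ)+1)) := by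
      ext x
      simp only [Set.mem_Ici, Set.mem_iInter]
      constructor
      · intro hx k
        have : (0:ℝ) < 1/((k:ℝ)+1) := by positivity
        linarith
      · intro h
        by_contra hxa
        push_neg at hxa
        obtain ⟨k, hk⟩ := exists_nat_one_div_lt (sub_pos.mpr hxa)
        have := h k
        linarith
    rw [hInter]
    have hanti : Antitone (fun k : ℕ => Set.Ici (a - 1/((k:ℝ)+1))) := by
      intro k l hkl
      apply Set.Ici_subset_Ici.mpr
      have hkl' : ((k:ℝ)+1) ≤ ((l:ℝ)+1) := by
        have : (k:ℝ) ≤ l := by exact_mod_cast hkl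
        linarith
      have := one_div_le_one_div_of_le (by positivity : (0:ℝ) < (k:ℝ)+1) hkl'
      linarith
    refine ge_of_tendsto (tendsto_measure_iInter_atTop
      (fun k => measurableSet_Ici.nullMeasurableSet) hanti ⟨0, measure_ne_top _ _⟩)
      (Eventually.of_forall fun k => ?_)
    have hnotS : (a - 1/((k:ℝ)+1)) ∉ S := by
      intro hmem
      have h1 := haS _ hmem
      have : (0:ℝ) < 1/((k:ℝ)+1) := by positivity
      linarith
    have hnotle : ¬ (P0 (Set.Ici (a - 1/((k:ℝ)+1))) ≤ ENNReal.ofReal c) := fun hle =>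
      hnotS (hFle.mpr hle)
    exact (not_le.mp hnotle).le
  have hIci : P0 (Set.Ici a) = ENNReal.ofReal c := le_antisymm hupper hlower
  have hScases : S = Set.Ici a ∨ S = Set.Ioi a := by
    by_cases ha : a ∈ S
    · left
      refine Set.Subset.antisymm (fun x hx => haS x hx) (fun x hx => ?_)
      rcases eq_or_lt_of_le (Set.mem_Ici.mp hx) with heq | h
      · rwa [← heq]
      · exact hIoiS h
    · right
      refine Set.Subset.antisymm (fun x hx => ?_) hIoiS
      rcases eq_or_lt_of_le (haS x hx) with heq | h
      · exact absurd (heq ▸ hx) ha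
      · exact h
  constructor
  · rcases hScases with h | h
    · rw [h]; exact measurableSet_Ici
    · rw [h]; exact measurableSet_Ioi
  · rcases hScases with h | h
    · rw [h, hIci]
    · rw [h, ← hIciIoi, hIci]

lemma integral_indicator_F0 (P0 : Measure ℝ) [IsProbabilityMeasure P0]
    (hcont : ∀ x : ℝ, P0 {x} = 0) {c : ℝ} (hc0 : 0 < c) (hc1 : c < 1) :
    ∫ x, (if F0 P0 x ≤ c then (1:ℝ) else 0) ∂P0 = c := by
  obtain ⟨hMS, hPS⟩ := F0_uniform P0 hcont hc0 hc1
  have hfun : (fun x => if F0 P0 x ≤ c then (1:ℝ) else 0)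
      = Set.indicator {x | F0 P0 x ≤ c} (fun _ => (1:ℝ)) := by
    funext x
    simp only [Set.indicator_apply, Set.mem_setOf_eq]
  rw [hfun, MeasureTheory.integral_indicator_const (1:ℝ) hMS, measureReal_def, hPS, smul_eq_mul, mul_one,
    ENNReal.toReal_ofReal hc0.le]

end MeasureLemmas
section Transfer

variable {n m : ℕ} {H0 : Finset (Fin m)}

lemma measurable_nullVec (H0 : Finset (Fin m)) : Measurable (nullVec (n := n) H0) := by
  apply measurable_pi_lambda
  intro i
  cases i with
  | inl j => exact (measurable_pi_apply j).comp measurable_fst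
  | inr i => exact (measurable_pi_apply i.1).comp measurable_snd

lemma measurable_restVec (H0 : Finset (Fin m)) :
    Measurable (fun (z : Data n m) (i : {i : Fin m // i ∉ H0}) => z.2 i.1) := by
  apply measurable_pi_lambda
  intro i
  exact (measurable_pi_apply i.1).comp measurable_snd

lemma map_nullVec_eq_pi (P : Measure (Data n m)) (P0 : Measure ℝ)
    (h1 : iIndepFun (fun i z => nullVec H0 z i) P)
    (h2 : ∀ i, P.map (fun z => nullVec H0 z i) = P0) [IsProbabilityMeasure P0] :
    P.map (nullVec H0) = Measure.pi (fun _ : Fin n ⊕ {i : Fin m // i ∈ H0} => P0) := by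
  refine (Measure.pi_eq fun s hs => ?_).symm
  rw [Measure.map_apply (measurable_nullVec H0) (MeasurableSet.univ_pi hs)]
  have hpre : nullVec H0 ⁻¹' (Set.pi Set.univ s)
      = ⋂ i ∈ (Finset.univ : Finset (Fin n ⊕ {i : Fin m // i ∈ H0})),
          (fun z => nullVec H0 z i) ⁻¹' (s i) := by
    ext z
    simp [Set.mem_iInter, Set.mem_univ_pi]
  rw [hpre, (iIndepFun_iff_measure_inter_preimage_eq_mul.mp h1) Finset.univ (fun i _ => hs i)]
  refine Finset.prod_congr rfl fun i _ => ?_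
  rw [← h2 i, Measure.map_apply ?_ (hs i)]
  cases i with
  | inl j => exact (measurable_pi_apply j).comp measurable_fst
  | inr i => exact (measurable_pi_apply i.1).comp measurable_snd

lemma map_pair_eq_prod (P : Measure (Data n m)) [IsProbabilityMeasure P] (P0 : Measure ℝ)
    [IsProbabilityMeasure P0] (hindep : IndepAssumption P H0 P0) :
    P.map (fun z => (nullVec H0 z, fun (i : {i : Fin m // i ∉ H0}) => z.2 i.1))
      = (Measure.pi (fun _ : Fin n ⊕ {i : Fin m // i ∈ H0} => P0)).prod
          (P.map (fun z (i : {i : Fin m // i ∉ H0}) => z.2 i.1)) := by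
  have h := (indepFun_iff_map_prod_eq_prod_map_map
      (measurable_nullVec H0).aemeasurable (measurable_restVec H0).aemeasurable).mp hindep.2.2
  rw [h, map_nullVec_eq_pi P P0 hindep.1 hindep.2.1]

lemma integral_pair_transfer (P : Measure (Data n m)) [IsProbabilityMeasure P] (P0 : Measure ℝ)
    [IsProbabilityMeasure P0] (hindep : IndepAssumption P H0 P0)
    (g : ((Fin n ⊕ {i : Fin m // i ∈ H0}) → ℝ) × ({i : Fin m // i ∉ H0} → ℝ) → ℝ)
    (hg : Measurable g) :
    ∫ z, g (nullVec H0 z, fun (i : {i : Fin m // i ∉ H0}) => z.2 i.1) ∂P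
      = ∫ p, g p ∂((Measure.pi (fun _ : Fin n ⊕ {i : Fin m // i ∈ H0} => P0)).prod
          (P.map (fun z (i : {i : Fin m // i ∉ H0}) => z.2 i.1))) := by
  rw [← map_pair_eq_prod P P0 hindep,
    integral_map ((measurable_nullVec H0).prodMk (measurable_restVec H0)).aemeasurable
      hg.aestronglyMeasurable]

end Transfer
section HatSide

variable {n m : ℕ} {H0 : Finset (Fin m)} {α : ℝ}

/-- Empirical p-values as a function of the (null, non-null) blocks. -/
def qhat (n m : ℕ) (H0 : Finset (Fin m))
    (p : ((Fin n ⊕ {i : Fin m // i ∈ H0}) → ℝ) × ({i : Fin m // i ∉ H0} → ℝ)) : Fin m → ℝ :=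
  pvec n m (Phi n m H0 p)

lemma measurable_Phi_snd (j : Fin m) :
    Measurable fun p : ((Fin n ⊕ {i : Fin m // i ∈ H0}) → ℝ) × ({i : Fin m // i ∉ H0} → ℝ) =>
      (Phi n m H0 p).2 j := by
  show Measurable fun p : ((Fin n ⊕ {i : Fin m // i ∈ H0}) → ℝ) × ({i : Fin m // i ∉ H0} → ℝ) =>
    if h : j ∈ H0 then p.1 (Sum.inr ⟨j, h⟩) else p.2 ⟨j, h⟩
  by_cases h : j ∈ H0
  · simp only [dif_pos h]
    exact (measurable_pi_apply _).comp measurable_fst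
  · simp only [dif_neg h]
    exact (measurable_pi_apply _).comp measurable_snd

lemma measurable_qhat (j : Fin m) : Measurable fun p => qhat n m H0 p j := by
  unfold qhat pvec
  exact measurable_phat_comp
    (fun j' => (measurable_pi_apply (Sum.inl j')).comp measurable_fst)
    (measurable_Phi_snd j)

/-- The FDP summand of coordinate `i0` for the semi-supervised procedure, as a function of
the blocks. -/
def ghat (n m : ℕ) (H0 : Finset (Fin m)) (α : ℝ) (i0 : {i : Fin m // i ∈ H0})
    (p : ((Fin n ⊕ {i : Fin m // i ∈ H0}) → ℝ) × ({i : Fin m // i ∉ H0} → ℝ)) : ℝ :=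
  (if qhat n m H0 p i0.1 ≤ α * BHk m α (qhat n m H0 p) / m then (1:ℝ) else 0) /
    max 1 ((BHk m α (qhat n m H0 p) : ℝ))

lemma measurable_ghat (i0 : {i : Fin m // i ∈ H0}) : Measurable (ghat n m H0 α i0) :=
  measurable_summand α (fun j => measurable_qhat j) i0.1

lemma ghat_bound (i0 : {i : Fin m // i ∈ H0}) (p) :
    ghat n m H0 α i0 p ∈ Set.Icc (0:ℝ) 1 :=
  summand_bound α (qhat n m H0 p) i0.1

lemma hat_integral_le (P0 : Measure ℝ) [IsProbabilityMeasure P0]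
    (ν : Measure ({i : Fin m // i ∉ H0} → ℝ)) [IsProbabilityMeasure ν]
    (hα : 0 < α) (hm : 1 ≤ m) (i0 : {i : Fin m // i ∈ H0}) :
    ∫ p, ghat n m H0 α i0 p
        ∂((Measure.pi (fun _ : Fin n ⊕ {i : Fin m // i ∈ H0} => P0)).prod ν)
      ≤ α / m := by
  classical
  haveI : SFinite ν := by haveI := IsFiniteMeasure.toSigmaFinite ν; infer_instance
  set μ2 := (Measure.pi (fun _ : Fin n ⊕ {i : Fin m // i ∈ H0} => P0)).prod ν with hμ2
  have hmeas := measurable_ghat (n := n) (α := α) i0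
  have hint : Integrable (ghat n m H0 α i0) μ2 :=
    integrable_of_bounded_one hmeas (ghat_bound i0)
  have hTmeas : ∀ c : Option (Fin n),
      Measurable (fun p : ((Fin n ⊕ {i : Fin m // i ∈ H0}) → ℝ) × ({i : Fin m // i ∉ H0} → ℝ)
        => (p.1 ∘ (tauC i0 c), p.2)) := fun c =>
    ((measurable_comp_perm (tauC i0 c)).comp measurable_fst).prodMk measurable_snd
  have hinv : ∀ c : Option (Fin n),
      ∫ p, ghat n m H0 α i0 p ∂μ2 = ∫ p, ghat n m H0 α i0 (p.1 ∘ (tauC i0 c), p.2) ∂μ2 := by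
    intro c
    have hT : MeasurePreserving
        (Prod.map (fun v : (Fin n ⊕ {i : Fin m // i ∈ H0}) → ℝ => v ∘ (tauC i0 c))
          (id : ({i : Fin m // i ∉ H0} → ℝ) → _)) μ2 μ2 :=
      (measurePreserving_comp_perm P0 (tauC i0 c)).prod (MeasurePreserving.id ν)
    calc ∫ p, ghat n m H0 α i0 p ∂μ2
        = ∫ p, ghat n m H0 α i0 p ∂(Measure.map (Prod.map
            (fun v : (Fin n ⊕ {i : Fin m // i ∈ H0}) → ℝ => v ∘ (tauC i0 c)) id) μ2) := by
          rw [hT.map_eq]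
      _ = ∫ p, ghat n m H0 α i0 (p.1 ∘ (tauC i0 c), p.2) ∂μ2 :=
          integral_map hT.measurable.aemeasurable hmeas.aestronglyMeasurable
  have hintc : ∀ c : Option (Fin n),
      Integrable (fun p : ((Fin n ⊕ {i : Fin m // i ∈ H0}) → ℝ) × ({i : Fin m // i ∉ H0} → ℝ)
        => ghat n m H0 α i0 (p.1 ∘ (tauC i0 c), p.2)) μ2 := fun c =>
    integrable_of_bounded_one (hmeas.comp (hTmeas c)) (fun p => ghat_bound i0 _)
  have hsum : ((n:ℝ)+1) * ∫ p, ghat n m H0 α i0 p ∂μ2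
      = ∫ p, ∑ c : Option (Fin n), ghat n m H0 α i0 (p.1 ∘ (tauC i0 c), p.2) ∂μ2 := by
    rw [integral_finset_sum _ (fun c _ => hintc c)]
    have : ∀ c ∈ (Finset.univ : Finset (Option (Fin n))),
        ∫ p, ghat n m H0 α i0 (p.1 ∘ (tauC i0 c), p.2) ∂μ2
          = ∫ p, ghat n m H0 α i0 p ∂μ2 := fun c _ => (hinv c).symm
    rw [Finset.sum_congr rfl this, Finset.sum_const, Finset.card_univ, Fintype.card_option,
      Fintype.card_fin, nsmul_eq_mul]
    push_cast
    ring
  have hptwise : ∀ p : ((Fin n ⊕ {i : Fin m // i ∈ H0}) → ℝ) × ({i : Fin m // i ∉ H0} → ℝ),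
      ∑ c : Option (Fin n), ghat n m H0 α i0 (p.1 ∘ (tauC i0 c), p.2)
        ≤ ((n:ℝ)+1) * (α / m) := by
    intro p
    have := master_ineq i0 p.1 p.2 hα hm
    simp only [ghat, qhat, zC] at this ⊢
    convert this
    exact if_congr Iff.rfl rfl rfl
  have hbd : ∫ p, ∑ c : Option (Fin n), ghat n m H0 α i0 (p.1 ∘ (tauC i0 c), p.2) ∂μ2
      ≤ ((n:ℝ)+1) * (α / m) := by
    have h2 : ∫ p, (((n:ℝ)+1) * (α / m)) ∂μ2 = ((n:ℝ)+1) * (α / m) := by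
      rw [integral_const]
      simp
    calc ∫ p, ∑ c : Option (Fin n), ghat n m H0 α i0 (p.1 ∘ (tauC i0 c), p.2) ∂μ2
        ≤ ∫ _p, (((n:ℝ)+1) * (α / m)) ∂μ2 :=
          integral_mono (integrable_finset_sum _ (fun c _ => hintc c))
            (integrable_const _) hptwise
      _ = ((n:ℝ)+1) * (α / m) := h2
  have hn1 : (0:ℝ) < (n:ℝ) + 1 := by positivity
  nlinarith [hsum, hbd]

lemma FDR_hat_le (P : Measure (Data n m)) [IsProbabilityMeasure P]
    (P0 : Measure ℝ) [IsProbabilityMeasure P0]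
    (hindep : IndepAssumption P H0 P0) (hα : 0 < α) (hm : 1 ≤ m) :
    FDR P H0 (BHhat n m α) ≤ α * H0.card / m := by
  classical
  have hFDP : ∀ z : Data n m, FDP H0 (BHhat n m α z)
      = ∑ i0 ∈ H0.attach, ghat n m H0 α i0 (nullVec H0 z,
          fun (i : {i : Fin m // i ∉ H0}) => z.2 i.1) := by
    intro z
    have hq : qhat n m H0 (nullVec H0 z, fun (i : {i : Fin m // i ∉ H0}) => z.2 i.1)
        = pvec n m z := by
      unfold qhat
      rw [Phi_nullVec]
    show FDP H0 (BHset m α (pvec n m z)) = _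
    rw [FDP_BHset_eq hα.le H0 (pvec n m z)]
    rw [← Finset.sum_attach H0 (fun i =>
      (if pvec n m z i ≤ α * BHk m α (pvec n m z) / m then (1:ℝ) else 0) /
        max 1 ((BHk m α (pvec n m z) : ℝ)))]
    refine Finset.sum_congr rfl fun i0 _ => ?_
    simp only [ghat, hq]
  haveI : IsProbabilityMeasure (P.map (fun z (i : {i : Fin m // i ∉ H0}) => z.2 i.1)) :=
    Measure.isProbabilityMeasure_map (measurable_restVec H0).aemeasurable
  have hpairmeas : ∀ i0 : {i : Fin m // i ∈ H0},
      Measurable fun z : Data n m => ghat n m H0 α i0 (nullVec H0 z,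
        fun (i : {i : Fin m // i ∉ H0}) => z.2 i.1) := fun i0 =>
    (measurable_ghat i0).comp ((measurable_nullVec H0).prodMk (measurable_restVec H0))
  calc FDR P H0 (BHhat n m α)
      = ∫ z, ∑ i0 ∈ H0.attach, ghat n m H0 α i0 (nullVec H0 z,
          fun (i : {i : Fin m // i ∉ H0}) => z.2 i.1) ∂P := by
        rw [FDR]
        exact integral_congr_ae (Filter.Eventually.of_forall hFDP)
    _ = ∑ i0 ∈ H0.attach, ∫ z, ghat n m H0 α i0 (nullVec H0 z,
          fun (i : {i : Fin m // i ∉ H0}) => z.2 i.1) ∂P :=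
        integral_finset_sum _ (fun i0 _ => integrable_of_bounded_one (hpairmeas i0)
          (fun z => ghat_bound i0 _))
    _ = ∑ i0 ∈ H0.attach, ∫ p, ghat n m H0 α i0 p
          ∂((Measure.pi (fun _ : Fin n ⊕ {i : Fin m // i ∈ H0} => P0)).prod
            (P.map (fun z (i : {i : Fin m // i ∉ H0}) => z.2 i.1))) :=
        Finset.sum_congr rfl (fun i0 _ =>
          integral_pair_transfer P P0 hindep _ (measurable_ghat i0))
    _ ≤ ∑ _i0 ∈ H0.attach, α / m :=
        Finset.sum_le_sum (fun i0 _ => hat_integral_le P0 _ hα hm i0)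
    _ = α * H0.card / m := by
        rw [Finset.sum_const, Finset.card_attach, nsmul_eq_mul]
        ring

end HatSide
section StarSide

variable {n m : ℕ} {H0 : Finset (Fin m)} {α : ℝ}

/-- Oracle p-values as a function of the (null, non-null) blocks. -/
def qstar (n m : ℕ) (H0 : Finset (Fin m)) (P0 : Measure ℝ)
    (p : ((Fin n ⊕ {i : Fin m // i ∈ H0}) → ℝ) × ({i : Fin m // i ∉ H0} → ℝ)) : Fin m → ℝ :=
  fun j => F0 P0 ((Phi n m H0 p).2 j)

lemma measurable_qstar (P0 : Measure ℝ) [IsFiniteMeasure P0] (j : Fin m) :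
    Measurable fun p => qstar n m H0 P0 p j :=
  (measurable_F0 P0).comp (measurable_Phi_snd j)

/-- The FDP summand of coordinate `i0` for the oracle procedure. -/
def gstar (n m : ℕ) (H0 : Finset (Fin m)) (P0 : Measure ℝ) (α : ℝ)
    (i0 : {i : Fin m // i ∈ H0})
    (p : ((Fin n ⊕ {i : Fin m // i ∈ H0}) → ℝ) × ({i : Fin m // i ∉ H0} → ℝ)) : ℝ :=
  (if qstar n m H0 P0 p i0.1 ≤ α * BHk m α (qstar n m H0 P0 p) / m then (1:ℝ) else 0) /
    max 1 ((BHk m α (qstar n m H0 P0 p) : ℝ))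

/-- Leave-one-out version of the oracle FDP summand. -/
def gstar' (n m : ℕ) (H0 : Finset (Fin m)) (P0 : Measure ℝ) (α : ℝ)
    (i0 : {i : Fin m // i ∈ H0})
    (p : ((Fin n ⊕ {i : Fin m // i ∈ H0}) → ℝ) × ({i : Fin m // i ∉ H0} → ℝ)) : ℝ :=
  (if qstar n m H0 P0 p i0.1 ≤
      α * BHk m α (Function.update (qstar n m H0 P0 p) i0.1 0) / m then (1:ℝ) else 0) /
    max 1 ((BHk m α (Function.update (qstar n m H0 P0 p) i0.1 0) : ℝ))

lemma measurable_gstar (P0 : Measure ℝ) [IsFiniteMeasure P0] (i0 : {i : Fin m // i ∈ H0}) :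
    Measurable (gstar n m H0 P0 α i0) :=
  measurable_summand α (fun j => measurable_qstar P0 j) i0.1

lemma gstar_bound (P0 : Measure ℝ) (i0 : {i : Fin m // i ∈ H0}) (p) :
    gstar n m H0 P0 α i0 p ∈ Set.Icc (0:ℝ) 1 :=
  summand_bound α (qstar n m H0 P0 p) i0.1

lemma ite_div_max_bound {b : Prop} [Decidable b] (K : ℕ) :
    (if b then (1:ℝ) else 0) / max 1 ((K:ℝ)) ∈ Set.Icc (0:ℝ) 1 := by
  have h1 : (1:ℝ) ≤ max 1 ((K:ℝ)) := le_max_left _ _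
  constructor
  · apply div_nonneg ?_ (by linarith)
    split <;> norm_num
  · apply div_le_one_of_le₀ ?_ (by linarith)
    split <;> linarith

lemma gstar_eq_gstar' (P0 : Measure ℝ) (hα : 0 < α) :
    gstar n m H0 P0 α i0 = gstar' n m H0 P0 α i0 := by
  funext p
  exact term_eq_update hα (F0_nonneg P0 _)

lemma measurable_q_update (P0 : Measure ℝ) [IsFiniteMeasure P0]
    (i0 : {i : Fin m // i ∈ H0}) (j : Fin m) :
    Measurable fun p => Function.update (qstar n m H0 P0 p) i0.1 0 j := by
  rcases eq_or_ne j i0.1 with rfl | hj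
  · simp only [Function.update_self]
    exact measurable_const
  · simp only [Function.update_of_ne hj]
    exact measurable_qstar P0 j

lemma measurable_gstar' (P0 : Measure ℝ) [IsFiniteMeasure P0] (i0 : {i : Fin m // i ∈ H0}) :
    Measurable (gstar' n m H0 P0 α i0) := by
  have hK : Measurable fun p => BHk m α (Function.update (qstar n m H0 P0 p) i0.1 0) :=
    measurable_BHk α (measurable_q_update P0 i0)
  have hnum : Measurable fun p => (if qstar n m H0 P0 p i0.1 ≤
      α * BHk m α (Function.update (qstar n m H0 P0 p) i0.1 0) / m then (1:ℝ) else 0) :=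
    Measurable.ite (measurableSet_le (measurable_qstar P0 i0.1)
      (measurable_natCast_comp hK (fun k => α * k / m))) measurable_const measurable_const
  exact hnum.div (measurable_natCast_comp hK (fun k => max 1 (k:ℝ)))

lemma gstar'_bound (P0 : Measure ℝ) (i0 : {i : Fin m // i ∈ H0}) (p) :
    gstar' n m H0 P0 α i0 p ∈ Set.Icc (0:ℝ) 1 :=
  ite_div_max_bound _

lemma qstar_update_i0 (P0 : Measure ℝ) (i0 : {i : Fin m // i ∈ H0})
    (v : (Fin n ⊕ {i : Fin m // i ∈ H0}) → ℝ) (w : {i : Fin m // i ∉ H0} → ℝ) (x : ℝ) :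
    qstar n m H0 P0 (Function.update v (Sum.inr i0) x, w) i0.1 = F0 P0 x := by
  unfold qstar
  congr 1
  show (if h : i0.1 ∈ H0 then Function.update v (Sum.inr i0) x (Sum.inr ⟨i0.1, h⟩)
      else w ⟨i0.1, h⟩) = x
  rw [dif_pos i0.2]
  rw [show (⟨i0.1, i0.2⟩ : {i : Fin m // i ∈ H0}) = i0 from rfl, Function.update_self]

lemma update_qstar_update (P0 : Measure ℝ) (i0 : {i : Fin m // i ∈ H0})
    (v : (Fin n ⊕ {i : Fin m // i ∈ H0}) → ℝ) (w : {i : Fin m // i ∉ H0} → ℝ) (x : ℝ) :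
    Function.update (qstar n m H0 P0 (Function.update v (Sum.inr i0) x, w)) i0.1 0
      = Function.update (qstar n m H0 P0 (v, w)) i0.1 0 := by
  funext j
  rcases eq_or_ne j i0.1 with rfl | hj
  · rw [Function.update_self, Function.update_self]
  · rw [Function.update_of_ne hj, Function.update_of_ne hj]
    unfold qstar
    congr 1
    show (if h : j ∈ H0 then Function.update v (Sum.inr i0) x (Sum.inr ⟨j, h⟩) else w ⟨j, h⟩)
      = (if h : j ∈ H0 then v (Sum.inr ⟨j, h⟩) else w ⟨j, h⟩)
    by_cases h : j ∈ H0
    · rw [dif_pos h, dif_pos h, Function.update_of_ne (fun he => hj ?_)]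
      have := Sum.inr_injective he
      exact congrArg Subtype.val this
    · rw [dif_neg h, dif_neg h]

lemma star_integral_eq (P0 : Measure ℝ) [IsProbabilityMeasure P0]
    (hcont : ∀ x : ℝ, P0 {x} = 0)
    (ν : Measure ({i : Fin m // i ∉ H0} → ℝ)) [IsProbabilityMeasure ν]
    (hα : 0 < α) (hα1 : α < 1) (hm : 1 ≤ m) (i0 : {i : Fin m // i ∈ H0}) :
    ∫ p, gstar n m H0 P0 α i0 p
        ∂((Measure.pi (fun _ : Fin n ⊕ {i : Fin m // i ∈ H0} => P0)).prod ν)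
      = α / m := by
  classical
  haveI : SFinite ν := by haveI := IsFiniteMeasure.toSigmaFinite ν; infer_instance
  have hm' : (0:ℝ) < m := by exact_mod_cast hm
  rw [gstar_eq_gstar' P0 hα]
  rw [MeasureTheory.integral_prod_symm _
    (integrable_of_bounded_one (measurable_gstar' P0 i0) (gstar'_bound P0 i0))]
  have hinner : ∀ w, ∫ v, gstar' n m H0 P0 α i0 (v, w)
      ∂(Measure.pi (fun _ : Fin n ⊕ {i : Fin m // i ∈ H0} => P0)) = α / m := by
    intro w
    have hfw : Measurable fun v : (Fin n ⊕ {i : Fin m // i ∈ H0}) → ℝ =>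
        gstar' n m H0 P0 α i0 (v, w) :=
      (measurable_gstar' P0 i0).comp (measurable_id.prodMk measurable_const)
    rw [integral_update_pi P0 (Sum.inr i0) hfw (fun v => gstar'_bound P0 i0 _)]
    have hpoint : ∀ v : (Fin n ⊕ {i : Fin m // i ∈ H0}) → ℝ,
        ∫ x, gstar' n m H0 P0 α i0 (Function.update v (Sum.inr i0) x, w) ∂P0 = α / m := by
      intro v
      set K0 := BHk m α (Function.update (qstar n m H0 P0 (v, w)) i0.1 0) with hK0
      have hK01 : 1 ≤ K0 := one_le_BHk_update hα hm _ _
      have hK01' : (1:ℝ) ≤ (K0:ℝ) := by exact_mod_cast hK01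
      have hK0m : K0 ≤ m := BHk_le_m
      have hc0 : 0 < α * K0 / m := by positivity
      have hc1 : α * K0 / m < 1 := by
        have h1 : α * K0 ≤ α * m := by
          have : (K0:ℝ) ≤ m := by exact_mod_cast hK0m
          nlinarith
        calc α * K0 / m ≤ α * m / m := by
              apply div_le_div_of_nonneg_right h1 (by positivity)
          _ = α := by field_simp
          _ < 1 := hα1
      have hfx : ∀ x : ℝ, gstar' n m H0 P0 α i0 (Function.update v (Sum.inr i0) x, w)
          = (if F0 P0 x ≤ α * K0 / m then (1:ℝ) else 0) / (K0:ℝ) := by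
        intro x
        unfold gstar'
        rw [update_qstar_update P0 i0 v w x, qstar_update_i0 P0 i0 v w x, ← hK0,
          max_eq_right hK01']
      calc ∫ x, gstar' n m H0 P0 α i0 (Function.update v (Sum.inr i0) x, w) ∂P0
          = ∫ x, (if F0 P0 x ≤ α * K0 / m then (1:ℝ) else 0) / (K0:ℝ) ∂P0 := by
            exact integral_congr_ae (Filter.Eventually.of_forall hfx)
        _ = (∫ x, (if F0 P0 x ≤ α * K0 / m then (1:ℝ) else 0) ∂P0) / (K0:ℝ) :=
            integral_div _ _
        _ = (α * K0 / m) / (K0:ℝ) := by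
            rw [integral_indicator_F0 P0 hcont hc0 hc1]
        _ = α / m := by
            have : (K0:ℝ) ≠ 0 := by linarith
            field_simp
    calc ∫ v, (∫ x, gstar' n m H0 P0 α i0 (Function.update v (Sum.inr i0) x, w) ∂P0)
          ∂(Measure.pi (fun _ : Fin n ⊕ {i : Fin m // i ∈ H0} => P0))
        = ∫ _v, (α / m) ∂(Measure.pi (fun _ : Fin n ⊕ {i : Fin m // i ∈ H0} => P0)) :=
          integral_congr_ae (Filter.Eventually.of_forall hpoint)
      _ = α / m := by
          rw [integral_const]
          simp
  calc ∫ w, (∫ v, gstar' n m H0 P0 α i0 (v, w)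
        ∂(Measure.pi (fun _ : Fin n ⊕ {i : Fin m // i ∈ H0} => P0))) ∂ν
      = ∫ _w, (α / m) ∂ν := integral_congr_ae (Filter.Eventually.of_forall hinner)
    _ = α / m := by
        rw [integral_const]
        simp

lemma FDR_star_eq (P : Measure (Data n m)) [IsProbabilityMeasure P]
    (P0 : Measure ℝ) [IsProbabilityMeasure P0] (hcont : ∀ x : ℝ, P0 {x} = 0)
    (hindep : IndepAssumption P H0 P0) (hα : 0 < α) (hα1 : α < 1) (hm : 1 ≤ m) :
    FDR P H0 (BHstar n m P0 α) = α * H0.card / m := by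
  classical
  have hFDP : ∀ z : Data n m, FDP H0 (BHstar n m P0 α z)
      = ∑ i0 ∈ H0.attach, gstar n m H0 P0 α i0 (nullVec H0 z,
          fun (i : {i : Fin m // i ∉ H0}) => z.2 i.1) := by
    intro z
    have hq : qstar n m H0 P0 (nullVec H0 z, fun (i : {i : Fin m // i ∉ H0}) => z.2 i.1)
        = fun j => F0 P0 (z.2 j) := by
      funext j
      unfold qstar
      rw [Phi_nullVec]
    show FDP H0 (BHset m α (fun j => F0 P0 (z.2 j))) = _
    rw [FDP_BHset_eq hα.le H0 (fun j => F0 P0 (z.2 j))]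
    rw [← Finset.sum_attach H0 (fun i =>
      (if F0 P0 (z.2 i) ≤ α * BHk m α (fun j => F0 P0 (z.2 j)) / m then (1:ℝ) else 0) /
        max 1 ((BHk m α (fun j => F0 P0 (z.2 j)) : ℝ)))]
    refine Finset.sum_congr rfl fun i0 _ => ?_
    simp only [gstar, hq]
  haveI : IsProbabilityMeasure (P.map (fun z (i : {i : Fin m // i ∉ H0}) => z.2 i.1)) :=
    Measure.isProbabilityMeasure_map (measurable_restVec H0).aemeasurable
  have hpairmeas : ∀ i0 : {i : Fin m // i ∈ H0},
      Measurable fun z : Data n m => gstar n m H0 P0 α i0 (nullVec H0 z,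
        fun (i : {i : Fin m // i ∉ H0}) => z.2 i.1) := fun i0 =>
    (measurable_gstar P0 i0).comp ((measurable_nullVec H0).prodMk (measurable_restVec H0))
  calc FDR P H0 (BHstar n m P0 α)
      = ∫ z, ∑ i0 ∈ H0.attach, gstar n m H0 P0 α i0 (nullVec H0 z,
          fun (i : {i : Fin m // i ∉ H0}) => z.2 i.1) ∂P := by
        rw [FDR]
        exact integral_congr_ae (Filter.Eventually.of_forall hFDP)
    _ = ∑ i0 ∈ H0.attach, ∫ z, gstar n m H0 P0 α i0 (nullVec H0 z,
          fun (i : {i : Fin m // i ∉ H0}) => z.2 i.1) ∂P :=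
        integral_finset_sum _ (fun i0 _ => integrable_of_bounded_one (hpairmeas i0)
          (fun z => gstar_bound P0 i0 _))
    _ = ∑ i0 ∈ H0.attach, ∫ p, gstar n m H0 P0 α i0 p
          ∂((Measure.pi (fun _ : Fin n ⊕ {i : Fin m // i ∈ H0} => P0)).prod
            (P.map (fun z (i : {i : Fin m // i ∉ H0}) => z.2 i.1))) :=
        Finset.sum_congr rfl (fun i0 _ =>
          integral_pair_transfer P P0 hindep _ (measurable_gstar P0 i0))
    _ = ∑ _i0 ∈ H0.attach, α / m :=
        Finset.sum_congr rfl (fun i0 _ => star_integral_eq P0 hcont _ hα hα1 hm i0)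
    _ = α * H0.card / m := by
        rw [Finset.sum_const, Finset.card_attach, nsmul_eq_mul]
        ring

end StarSide
/-- **Conservativeness relative to the oracle.** Under Assumption (Indep) with `P0`
atomless, for all `n, m ≥ 1` and `α ∈ (0,1)`, the semi-supervised BH procedure
satisfies `FDR(P, BĤ_α) ≤ α·m₀/m = FDR(P, BH*_α)`: its FDR is at most the FDR of the
oracle BH procedure at the same level. -/
theorem fdr_at_most_oracle
    (n m : ℕ) (hn : 1 ≤ n) (hm : 1 ≤ m)
    (α : ℝ) (hα : α ∈ Set.Ioo (0 : ℝ) 1)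
    (P : Measure (Data n m)) [IsProbabilityMeasure P]
    (P0 : Measure ℝ) [IsProbabilityMeasure P0]
    (hcont : ∀ x : ℝ, P0 {x} = 0)
    (H0 : Finset (Fin m))
    (hindep : IndepAssumption P H0 P0) :
    FDR P H0 (BHhat n m α) ≤ α * H0.card / m ∧
    α * H0.card / m = FDR P H0 (BHstar n m P0 α) := by
  obtain ⟨hα0, hα1⟩ := hα
  exact ⟨FDR_hat_le P P0 hindep hα0 hm,
    (FDR_star_eq P P0 hcont hindep hα0 hα1 hm).symm⟩

end SemiSup
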